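/- Let A₁ = [[−1/2,0,0],[0,0,1],[0,1,0]], A₂ = [[0,0,1],[0,−1/2,0],[1,0,0]], A₃ = [[0,1,0],[1,0,0],[0,0,−1/2]] in M₃(ℂ) (the key-example matrices for d = 3, t = −1/2). Then: (a) the set {A₁², A₂², A₃²} is linearly independent over ℂ; (b) ∑_{m≠n} A_m A_n = 0, i.e. the sum of all six products A_m A_n with m ≠ n vanishes; (c) [A₁,A₂] + [A₂,A₃] + [A₃,A₁] = 0; and (d) A₁A₂ + A₂A₃ + A₃A₁ = 0 and A₁A₃ + A₃A₂ + A₂A₁ = 0. -/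

import Mathlib

/-!
Each square is `A_m² = 1 - (3/4) E_mm`; the `k`-th diagonal entry of a vanishing combination
`∑ g_m A_m²` says `(3/4) g_k = ∑ g_m`, which forces `g = 0` because `3/4 ≠ 3`.
The cyclic sum `A₁A₂ + A₂A₃ + A₃A₁` vanishes by direct computation; since every `A_m` is
symmetric, the anticyclic sum is its transpose. The sum over `m ≠ n` and the sum of commutators
are the sum and the difference of these two.
-/

open Matrix

noncomputable section

/-- The key-example matrices for `d = 3`, `t = −1/2`:
`A₁ = [[−1/2,0,0],[0,0,1],[0,1,0]]`, `A₂ = [[0,0,1],[0,−1/2,0],[1,0,0]]`,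
`A₃ = [[0,1,0],[1,0,0],[0,0,−1/2]]`. -/
def Akey : Fin 3 → Matrix (Fin 3) (Fin 3) ℂ :=
  ![!![-(1/2), 0, 0; 0, 0, 1; 0, 1, 0],
    !![0, 0, 1; 0, -(1/2), 0; 1, 0, 0],
    !![0, 1, 0; 1, 0, 0; 0, 0, -(1/2)]]

theorem Fin.sum_filter_ne_three {M : Type*} [AddCommMonoid M] (f : Fin 3 → Fin 3 → M) :
    ∑ p ∈ Finset.univ.filter (fun p : Fin 3 × Fin 3 => p.1 ≠ p.2), f p.1 p.2 =
      (f 0 1 + f 1 2 + f 2 0) + (f 0 2 + f 2 1 + f 1 0) := by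
  rw [Finset.sum_filter, Fintype.sum_prod_type]
  simp only [Fin.sum_univ_three, Fin.isValue, ne_eq, not_true_eq_false, if_false,
    Fin.reduceEq, not_false_eq_true, if_true, zero_add, add_zero]
  abel

theorem Matrix.linearIndependent_one_sub_smul_single {n K : Type*} [Fintype n] [DecidableEq n]
    [Field K] {c : K} (hc : c ≠ 0) (hcn : c ≠ Fintype.card n) :
    LinearIndependent K (fun m : n => (1 : Matrix n n K) - c • single m m 1) := by
  rw [Fintype.linearIndependent_iff]
  intro g hg
  have hdiag : ∀ k, ∑ m, g m - c * g k = 0 := by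
    intro k
    have := congrFun (congrFun hg k) k
    simpa [Matrix.sum_apply, single_apply, mul_sub, Finset.sum_sub_distrib, mul_comm c] using this
  have hsum : ∑ m, g m = 0 := by
    have := Finset.sum_eq_zero (s := Finset.univ) (fun k _ => hdiag k)
    rw [Finset.sum_sub_distrib, ← Finset.mul_sum, Finset.sum_const, Finset.card_univ,
      nsmul_eq_mul, ← sub_mul] at this
    exact (mul_eq_zero.mp this).resolve_left (sub_ne_zero.mpr hcn.symm)
  intro k
  simpa [hsum, hc] using hdiag k

theorem Akey_transpose (m : Fin 3) : (Akey m)ᵀ = Akey m := by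
  fin_cases m <;> ext i j <;> fin_cases i <;> fin_cases j <;> rfl

theorem Akey_mul_self (m : Fin 3) : Akey m * Akey m = 1 - (3 / 4 : ℂ) • single m m 1 := by
  fin_cases m <;> ext i j <;> fin_cases i <;> fin_cases j <;>
    simp [Akey, one_apply] <;> norm_num

theorem Akey_cyclic_sum : Akey 0 * Akey 1 + Akey 1 * Akey 2 + Akey 2 * Akey 0 = 0 := by
  ext i j
  fin_cases i <;> fin_cases j <;> simp [Akey] <;> norm_num

theorem Akey_anticyclic_sum : Akey 0 * Akey 2 + Akey 2 * Akey 1 + Akey 1 * Akey 0 = 0 := by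
  calc Akey 0 * Akey 2 + Akey 2 * Akey 1 + Akey 1 * Akey 0
      = (Akey 0 * Akey 1 + Akey 1 * Akey 2 + Akey 2 * Akey 0)ᵀ := by
        simp only [transpose_add, transpose_mul, Akey_transpose]
        abel
    _ = 0 := by rw [Akey_cyclic_sum, transpose_zero]

theorem Akey_relations :
    LinearIndependent ℂ (fun m : Fin 3 => Akey m * Akey m) ∧
    (∑ p ∈ Finset.univ.filter (fun p : Fin 3 × Fin 3 => p.1 ≠ p.2),
        Akey p.1 * Akey p.2) = 0 ∧
    (Akey 0 * Akey 1 - Akey 1 * Akey 0) + (Akey 1 * Akey 2 - Akey 2 * Akey 1) +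
      (Akey 2 * Akey 0 - Akey 0 * Akey 2) = 0 ∧
    Akey 0 * Akey 1 + Akey 1 * Akey 2 + Akey 2 * Akey 0 = 0 ∧
    Akey 0 * Akey 2 + Akey 2 * Akey 1 + Akey 1 * Akey 0 = 0 := by
  refine ⟨?_, ?_, ?_, Akey_cyclic_sum, Akey_anticyclic_sum⟩
  · simp only [Akey_mul_self]
    exact linearIndependent_one_sub_smul_single (by norm_num) (by norm_num)
  · rw [Fin.sum_filter_ne_three (fun m n => Akey m * Akey n), Akey_cyclic_sum,
      Akey_anticyclic_sum, add_zero]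
  · calc (Akey 0 * Akey 1 - Akey 1 * Akey 0) + (Akey 1 * Akey 2 - Akey 2 * Akey 1) +
          (Akey 2 * Akey 0 - Akey 0 * Akey 2)
        = (Akey 0 * Akey 1 + Akey 1 * Akey 2 + Akey 2 * Akey 0) -
            (Akey 0 * Akey 2 + Akey 2 * Akey 1 + Akey 1 * Akey 0) := by abel
      _ = 0 := by rw [Akey_cyclic_sum, Akey_anticyclic_sum, sub_zero]

end
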